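/- Let g = sl(2) with standard basis e, f, h, Killing-normalized invariant form with (e,f) = 1 and (h,h) = 2, Cartan subalgebra spanned by h, and coordinate λ on h* given by λ(h). Then the meromorphic function r(λ) = (1/λ) e⊗f − (1/λ) f⊗e (with X = Δ = {α, −α}) satisfies the classical dynamical Yang–Baxter equation with zero weight and zero coupling constant. -/

import Mathlib

/-! Since `r(λ) = c / λ` with `c = e ⊗ f - f ⊗ e`, the three brackets of `r` scale by `1 / λ²` and
`Alt(dr) = -(1 / λ²) Alt(h ⊗ c)`, so the dynamical equation reduces to the `λ`-free identity
`[c¹², c¹³] + [c¹², c²³] + [c¹³, c²³] = Alt(h ⊗ c)`. On pure tensors each bracket is a single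
commutator in one tensor slot, and `[e, f] = h` turns the six surviving terms into the cyclic
orbits of `h ⊗ e ⊗ f` and `-h ⊗ f ⊗ e`. Zero weight holds because `ad h` acts on `e` and `f` by
opposite scalars, and skew-symmetry because the flip exchanges the two terms of `c`. -/

open scoped TensorProduct

noncomputable section

/-- `g = sl(2) ⊂ A := Mat₂(ℂ)`: the standard basis. -/
abbrev MatA : Type := Matrix (Fin 2) (Fin 2) ℂ

def eM : MatA := !![0, 1; 0, 0]
def fM : MatA := !![0, 0; 1, 0]
def hM : MatA := !![1, 0; 0, -1]

/-- `g ⊗ g`, computed inside `A ⊗ A`. -/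
abbrev T2 : Type := MatA ⊗[ℂ] MatA
/-- `g ⊗ g ⊗ g`, computed inside `A ⊗ A ⊗ A`. -/
abbrev T3 : Type := MatA ⊗[ℂ] (MatA ⊗[ℂ] MatA)

/-- `r ↦ r¹²`. -/
def p12 : T2 →ₐ[ℂ] T3 :=
  Algebra.TensorProduct.map (AlgHom.id ℂ MatA)
    (Algebra.TensorProduct.includeLeft : MatA →ₐ[ℂ] MatA ⊗[ℂ] MatA)

/-- `r ↦ r¹³`. -/
def p13 : T2 →ₐ[ℂ] T3 :=
  Algebra.TensorProduct.map (AlgHom.id ℂ MatA)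
    (Algebra.TensorProduct.includeRight : MatA →ₐ[ℂ] MatA ⊗[ℂ] MatA)

/-- `r ↦ r²³`. -/
def p23 : T2 →ₐ[ℂ] T3 := Algebra.TensorProduct.includeRight

/-- The cyclic permutation `a ⊗ b ⊗ c ↦ c ⊗ a ⊗ b` on the triple tensor power. -/
def cyc : T3 →ₗ[ℂ] T3 :=
  (TensorProduct.comm ℂ (MatA ⊗[ℂ] MatA) MatA).toLinearMap ∘ₗ
    (TensorProduct.assoc ℂ MatA MatA MatA).symm.toLinearMap

/-- The alternation (cyclic sum) `Alt`. -/
def AltT (u : T3) : T3 := u + cyc u + cyc (cyc u)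

/-- `c = e ⊗ f - f ⊗ e`. -/
def cT : T2 := eM ⊗ₜ[ℂ] fM - fM ⊗ₜ[ℂ] eM

/-- The dynamical r-matrix `r(λ) = (1/λ) e ⊗ f - (1/λ) f ⊗ e` of the `X = Δ`,
zero-coupling-constant case of the Etingof–Varchenko theorem for `sl(2)`. -/
def rEV (z : ℂ) : T2 := (1 / z) • cT

section

attribute [local instance] LieRing.ofAssociativeRing LieAlgebra.ofAssociativeAlgebra

section TensorBracket

open TensorProduct

variable {R A B : Type*} [CommRing R] [Ring A] [Ring B] [Algebra R A] [Algebra R B]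

lemma lie_tmul_tmul_of_commute_right {a c : A} {b d : B} (hbd : Commute b d) :
    ⁅a ⊗ₜ[R] b, c ⊗ₜ[R] d⁆ = ⁅a, c⁆ ⊗ₜ (b * d) := by
  rw [Ring.lie_def, Ring.lie_def, Algebra.TensorProduct.tmul_mul_tmul,
    Algebra.TensorProduct.tmul_mul_tmul, hbd.eq, sub_tmul]

lemma lie_tmul_tmul_of_commute_left {a c : A} {b d : B} (hac : Commute a c) :
    ⁅a ⊗ₜ[R] b, c ⊗ₜ[R] d⁆ = (a * c) ⊗ₜ ⁅b, d⁆ := by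
  rw [Ring.lie_def, Ring.lie_def, Algebra.TensorProduct.tmul_mul_tmul,
    Algebra.TensorProduct.tmul_mul_tmul, hac.eq, tmul_sub]

lemma lie_tmul_one_add_one_tmul (x a : A) (y b : B) :
    ⁅x ⊗ₜ[R] (1 : B) + (1 : A) ⊗ₜ[R] y, a ⊗ₜ[R] b⁆ = ⁅x, a⁆ ⊗ₜ b + a ⊗ₜ ⁅y, b⁆ := by
  rw [add_lie, lie_tmul_tmul_of_commute_right (Commute.one_left b),
    lie_tmul_tmul_of_commute_left (Commute.one_left a), one_mul, one_mul]

end TensorBracket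

lemma deriv_one_div {𝕜 : Type*} [NontriviallyNormedField 𝕜] (z : 𝕜) :
    deriv (fun w : 𝕜 => 1 / w) z = -(1 / z) ^ 2 := by
  simp only [one_div, deriv_inv, inv_pow]

lemma lie_eM_fM : ⁅eM, fM⁆ = hM := by
  ext i j; fin_cases i <;> fin_cases j <;> norm_num [Ring.lie_def, eM, fM, hM]

lemma lie_hM_eM : ⁅hM, eM⁆ = (2 : ℂ) • eM := by
  ext i j; fin_cases i <;> fin_cases j <;> norm_num [Ring.lie_def, eM, hM]

lemma lie_hM_fM : ⁅hM, fM⁆ = -((2 : ℂ) • fM) := by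
  ext i j; fin_cases i <;> fin_cases j <;> norm_num [Ring.lie_def, fM, hM]

/- The additive and scalar structures of `T2` and `T3` as tensor products agree with those coming
from their algebra structures only after unfolding, so the generic bracket lemmas do not rewrite
there; these instances of them do. -/
lemma T2.lie_smul (k : ℂ) (a b : T2) : ⁅a, k • b⁆ = k • ⁅a, b⁆ := _root_.lie_smul k a b

lemma T3.sub_lie (a b c : T3) : ⁅a - b, c⁆ = ⁅a, c⁆ - ⁅b, c⁆ := _root_.sub_lie a b c

lemma T3.lie_sub (a b c : T3) : ⁅a, b - c⁆ = ⁅a, b⁆ - ⁅a, c⁆ := _root_.lie_sub a b c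

lemma T3.smul_lie (k : ℂ) (a b : T3) : ⁅k • a, b⁆ = k • ⁅a, b⁆ := _root_.smul_lie k a b

lemma T3.lie_smul (k : ℂ) (a b : T3) : ⁅a, k • b⁆ = k • ⁅a, b⁆ := _root_.lie_smul k a b

lemma lie_p12_p13_tmul (a b c d : MatA) :
    ⁅p12 (a ⊗ₜ b), p13 (c ⊗ₜ d)⁆ = ⁅a, c⁆ ⊗ₜ (b ⊗ₜ d) := by
  simp only [p12, p13, Algebra.TensorProduct.map_tmul, AlgHom.id_apply,
    Algebra.TensorProduct.includeLeft_apply, Algebra.TensorProduct.includeRight_apply]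
  rw [lie_tmul_tmul_of_commute_right ((Commute.one_right b).tmul (Commute.one_left d)),
    Algebra.TensorProduct.tmul_mul_tmul, mul_one, one_mul]

lemma lie_p12_p23_tmul (a b c d : MatA) :
    ⁅p12 (a ⊗ₜ b), p23 (c ⊗ₜ d)⁆ = a ⊗ₜ (⁅b, c⁆ ⊗ₜ d) := by
  simp only [p12, p23, Algebra.TensorProduct.map_tmul, AlgHom.id_apply,
    Algebra.TensorProduct.includeLeft_apply, Algebra.TensorProduct.includeRight_apply]
  rw [lie_tmul_tmul_of_commute_left (Commute.one_right a), mul_one,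
    lie_tmul_tmul_of_commute_right (Commute.one_left d), one_mul]

lemma lie_p13_p23_tmul (a b c d : MatA) :
    ⁅p13 (a ⊗ₜ b), p23 (c ⊗ₜ d)⁆ = a ⊗ₜ (c ⊗ₜ ⁅b, d⁆) := by
  simp only [p13, p23, Algebra.TensorProduct.map_tmul, AlgHom.id_apply,
    Algebra.TensorProduct.includeRight_apply]
  rw [lie_tmul_tmul_of_commute_left (Commute.one_right a), mul_one,
    lie_tmul_tmul_of_commute_left (Commute.one_left c), one_mul]

lemma cyc_tmul (a b c : MatA) : cyc (a ⊗ₜ (b ⊗ₜ c)) = c ⊗ₜ (a ⊗ₜ b) := by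
  simp only [cyc, LinearMap.comp_apply, LinearEquiv.coe_coe, TensorProduct.assoc_symm_tmul,
    TensorProduct.comm_tmul]

lemma altT_smul (k : ℂ) (u : T3) : AltT (k • u) = k • AltT u := by
  simp only [AltT, map_smul, smul_add]

lemma classicalYB_cT_eq_altT :
    ⁅p12 cT, p13 cT⁆ + ⁅p12 cT, p23 cT⁆ + ⁅p13 cT, p23 cT⁆ = AltT (hM ⊗ₜ cT) := by
  have lie_fM_eM : ⁅fM, eM⁆ = -hM := by rw [← lie_skew, lie_eM_fM]
  simp only [cT, AltT, map_sub, T3.sub_lie, T3.lie_sub, lie_p12_p13_tmul, lie_p12_p23_tmul,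
    lie_p13_p23_tmul, lie_self, lie_eM_fM, lie_fM_eM, TensorProduct.zero_tmul,
    TensorProduct.tmul_zero, TensorProduct.neg_tmul, TensorProduct.tmul_neg,
    TensorProduct.tmul_sub, cyc_tmul]
  abel

lemma lie_hM_tmul_one_add_one_tmul_hM_cT :
    ⁅hM ⊗ₜ[ℂ] (1 : MatA) + (1 : MatA) ⊗ₜ hM, cT⁆ = 0 := by
  simp only [cT, lie_sub, lie_tmul_one_add_one_tmul, lie_hM_eM, lie_hM_fM,
    TensorProduct.smul_tmul, TensorProduct.neg_tmul, TensorProduct.tmul_neg]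
  abel

lemma comm_cT : TensorProduct.comm ℂ MatA MatA cT = -cT := by
  rw [cT, map_sub, TensorProduct.comm_tmul, TensorProduct.comm_tmul, neg_sub]

end

/-- With the conventions `(e,f) = 1`, `(h,h) = 2`, coordinate `λ = λ(h)` on `h*` and
`dr(λ) = h ⊗ dr/dλ`, the function `r(λ) = (1/λ) e ⊗ f - (1/λ) f ⊗ e` satisfies the classical
dynamical Yang–Baxter equation `Alt(dr) + [r¹²,r¹³] + [r¹²,r²³] + [r¹³,r²³] = 0`, the zero
weight condition, and skew-symmetry (zero coupling constant). -/
theorem stmt8 :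
    ∀ z : ℂ, z ≠ 0 →
      (AltT (hM ⊗ₜ[ℂ] (deriv (fun w : ℂ => 1 / w) z • cT)) +
          ⁅p12 (rEV z), p13 (rEV z)⁆ + ⁅p12 (rEV z), p23 (rEV z)⁆ +
          ⁅p13 (rEV z), p23 (rEV z)⁆ = 0) ∧
      ⁅hM ⊗ₜ[ℂ] (1 : MatA) + (1 : MatA) ⊗ₜ[ℂ] hM, rEV z⁆ = 0 ∧
      rEV z + TensorProduct.comm ℂ MatA MatA (rEV z) = 0 := by
  intro z _
  refine ⟨?_, ?_, ?_⟩
  · simp only [deriv_one_div, rEV, TensorProduct.tmul_smul, altT_smul, map_smul, T3.smul_lie,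
      T3.lie_smul, smul_smul]
    linear_combination (norm := module) (1 / z) ^ 2 • classicalYB_cT_eq_altT
  · rw [rEV, T2.lie_smul, lie_hM_tmul_one_add_one_tmul_hM_cT, smul_zero]
  · rw [rEV, map_smul, comm_cT, smul_neg, add_neg_cancel]

end
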